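/- arXiv:1203.4596 — 3 statements merged into one kernel-verified Lean document; each statement's English description precedes it below -/
import Mathlib

section
/- Let H be a separable real Hilbert space, α ∈ (0,1) and F ∈ C_α([0,1];H). Then for every n ≥ 0, ‖∫_{[0,1]} χ_n dF‖_H ≤ ‖F‖_α / c_n(α), where c_0(α) = 1 and c_n(α) = 2^{k(α−1/2)+α−1} for n = 2^k + l, 0 ≤ l ≤ 2^k − 1. Moreover, if F ∈ C_α^0([0,1];H), then c_n(α) ‖∫_{[0,1]} χ_n dF‖_H → 0 as n → ∞. -/
open MeasureTheory Filter Set Topology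
open scoped ENNReal NNReal

noncomputable section

namespace SchilderHilbert

/-- For `n ≥ 1`, the dyadic level `k` with `n = 2^k + l`, `0 ≤ l ≤ 2^k - 1`. -/
def haarK (n : ℕ) : ℕ := Nat.log 2 n

/-- For `n ≥ 1`, the shift `l` with `n = 2^k + l`, `0 ≤ l ≤ 2^k - 1`. -/
def haarL (n : ℕ) : ℕ := n - 2 ^ Nat.log 2 n

/-- The Haar functions on `[0,1]`. -/
noncomputable def haar (n : ℕ) (t : ℝ) : ℝ :=
  if n = 0 then 1
  else
    if (2 * haarL n : ℝ) / 2 ^ (haarK n + 1) ≤ t ∧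
        t < (2 * haarL n + 1 : ℝ) / 2 ^ (haarK n + 1) then
      2 ^ ((haarK n : ℝ) / 2)
    else if (2 * haarL n + 1 : ℝ) / 2 ^ (haarK n + 1) ≤ t ∧
        t ≤ (2 * haarL n + 2 : ℝ) / 2 ^ (haarK n + 1) then
      -(2 ^ ((haarK n : ℝ) / 2))
    else 0

/-- The Schauder functions, primitives of the Haar functions. -/
noncomputable def schauder (n : ℕ) (t : ℝ) : ℝ := ∫ s in (0:ℝ)..t, haar n s

/-- `∫_{[0,1]} χ_n dF`, the Haar coefficient of an `H`-valued function `F`. -/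
noncomputable def haarCoeff {H : Type*} [NormedAddCommGroup H] [NormedSpace ℝ H]
    (F : ℝ → H) (n : ℕ) : H :=
  if n = 0 then F 1 - F 0
  else
    (2 : ℝ) ^ ((haarK n : ℝ) / 2) •
      ((2 : ℝ) • F ((2 * haarL n + 1 : ℝ) / 2 ^ (haarK n + 1))
        - F ((2 * haarL n + 2 : ℝ) / 2 ^ (haarK n + 1))
        - F ((2 * haarL n : ℝ) / 2 ^ (haarK n + 1)))

/-- The Ciesielski coefficients `c_n(α)`: `c_0(α) = 1` and
`c_n(α) = 2^{k(α-1/2)+α-1}` for `n = 2^k + l`, `0 ≤ l ≤ 2^k - 1`. -/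
noncomputable def cCoef (α : ℝ) (n : ℕ) : ℝ :=
  if n = 0 then 1 else 2 ^ ((haarK n : ℝ) * (α - 1/2) + α - 1)

/-- The `α`-Hölder seminorm on `[0,1]` of an `H`-valued function. -/
noncomputable def holderSemi {H : Type*} [NormedAddCommGroup H] (α : ℝ) (F : ℝ → H) : ℝ :=
  sSup {r : ℝ | ∃ s ∈ Icc (0:ℝ) 1, ∃ t ∈ Icc (0:ℝ) 1, s < t ∧ r = ‖F t - F s‖ / (t - s) ^ α}

/-- Membership in `C_α([0,1];H)`: finite `α`-Hölder seminorm on `[0,1]`. -/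
def MemHolder {H : Type*} [NormedAddCommGroup H] (α : ℝ) (F : ℝ → H) : Prop :=
  ∃ C : ℝ, ∀ s ∈ Icc (0:ℝ) 1, ∀ t ∈ Icc (0:ℝ) 1, ‖F t - F s‖ ≤ C * |t - s| ^ α

/-- Membership in `C_α^0([0,1];H)`: `F(0) = 0`, finite `α`-Hölder seminorm and
vanishing `α`-Hölder modulus of continuity. -/
def MemHolder0 {H : Type*} [NormedAddCommGroup H] (α : ℝ) (F : ℝ → H) : Prop :=
  F 0 = 0 ∧ MemHolder α F ∧
    ∀ ε > 0, ∃ δ > 0, ∀ s ∈ Icc (0:ℝ) 1, ∀ t ∈ Icc (0:ℝ) 1,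
      s ≠ t → |t - s| < δ → ‖F t - F s‖ ≤ ε * |t - s| ^ α

/-!
For `n = 2^k + l ≥ 1`, `∫ χ_n dF` is `2^{k/2}` times the difference of the increments of `F`
over the two halves of the support of `χ_n`, intervals of length `2^{-(k+1)}`. Each increment
is at most `‖F‖_α 2^{-(k+1)α}`, and `c_n(α)` is exactly the inverse of `2^{k/2} · 2 · 2^{-(k+1)α}`.
For `F ∈ C_α^0` the same estimate holds with `‖F‖_α` replaced by the Hölder modulus at scale
`2^{-(k+1)}`, which tends to `0` since `k → ∞` with `n`.
-/

section

variable {H : Type*} [NormedAddCommGroup H]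

lemma haarL_add_one_le {n : ℕ} (hn : n ≠ 0) : haarL n + 1 ≤ 2 ^ haarK n := by
  have hlow : 2 ^ haarK n ≤ n := Nat.pow_log_le_self 2 hn
  have hup : n < 2 ^ (haarK n + 1) := Nat.lt_pow_succ_log_self one_lt_two n
  rw [haarL, ← haarK]
  omega

lemma tendsto_haarK_atTop : Tendsto haarK atTop atTop :=
  tendsto_atTop_atTop.2 fun K =>
    ⟨2 ^ K, fun _ hn =>
      (Nat.le_log_iff_pow_le one_lt_two ((Nat.two_pow_pos K).trans_le hn).ne').2 hn⟩

lemma tendsto_haarMesh_atTop :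
    Tendsto (fun n => ((2 : ℝ) ^ (haarK n + 1))⁻¹) atTop (𝓝 0) :=
  tendsto_inv_atTop_zero.comp <| (tendsto_pow_atTop_atTop_of_one_lt one_lt_two).comp <|
    (tendsto_add_atTop_nat 1).comp tendsto_haarK_atTop

lemma cCoef_pos (α : ℝ) (n : ℕ) : 0 < cCoef α n := by
  unfold cCoef
  split_ifs
  exacts [one_pos, Real.rpow_pos_of_pos two_pos _]

lemma cCoef_mul_eq_one (α : ℝ) {n : ℕ} (hn : n ≠ 0) :
    cCoef α n * (2 ^ ((haarK n : ℝ) / 2) * (2 * ((2 : ℝ) ^ (haarK n + 1))⁻¹ ^ α)) = 1 := by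
  have hmesh : ((2 : ℝ) ^ (haarK n + 1))⁻¹ = 2 ^ (-((haarK n : ℝ) + 1)) := by
    rw [Real.rpow_neg zero_le_two, ← Real.rpow_natCast]
    push_cast
    rfl
  rw [cCoef, if_neg hn, hmesh, ← Real.rpow_mul zero_le_two, mul_comm (2 : ℝ),
    ← Real.rpow_add_one two_ne_zero, ← Real.rpow_add two_pos, ← Real.rpow_add two_pos]
  convert Real.rpow_zero (2 : ℝ) using 2
  ring

lemma haarCoeff_eq_smul_sub [NormedSpace ℝ H] (F : ℝ → H) {n : ℕ} (hn : n ≠ 0) :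
    haarCoeff F n = (2 : ℝ) ^ ((haarK n : ℝ) / 2) •
      ((F ((2 * haarL n + 1 : ℝ) / 2 ^ (haarK n + 1)) - F ((2 * haarL n : ℝ) / 2 ^ (haarK n + 1)))
        - (F ((2 * haarL n + 2 : ℝ) / 2 ^ (haarK n + 1))
          - F ((2 * haarL n + 1 : ℝ) / 2 ^ (haarK n + 1)))) := by
  rw [haarCoeff, if_neg hn, two_smul]
  congr 1
  abel

lemma cCoef_mul_norm_haarCoeff_le [NormedSpace ℝ H] (α : ℝ) (F : ℝ → H) {n : ℕ} (hn : n ≠ 0)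
    (E : ℝ) (hE : ∀ s t : ℝ, 0 ≤ s → t ≤ 1 → t - s = ((2 : ℝ) ^ (haarK n + 1))⁻¹ →
      ‖F t - F s‖ ≤ E * (t - s) ^ α) :
    cCoef α n * ‖haarCoeff F n‖ ≤ E := by
  set k := haarK n
  set l := haarL n
  set h : ℝ := ((2 : ℝ) ^ (k + 1))⁻¹
  set a : ℝ := (2 * l : ℝ) / 2 ^ (k + 1)
  set m : ℝ := (2 * l + 1 : ℝ) / 2 ^ (k + 1)
  set b : ℝ := (2 * l + 2 : ℝ) / 2 ^ (k + 1)
  have hma : m - a = h := by simp only [m, a, h]; field_simp; ring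
  have hbm : b - m = h := by simp only [m, b, h]; field_simp; ring
  have ha : 0 ≤ a := by positivity
  have hb : b ≤ 1 := by
    have hl : (l : ℝ) + 1 ≤ 2 ^ k := by exact_mod_cast haarL_add_one_le hn
    rw [div_le_one (by positivity), pow_succ]
    linarith
  have hh : 0 ≤ h := by positivity
  calc cCoef α n * ‖haarCoeff F n‖
      ≤ cCoef α n * (2 ^ ((k : ℝ) / 2) * (‖F m - F a‖ + ‖F b - F m‖)) := by
        rw [haarCoeff_eq_smul_sub F hn, norm_smul, Real.norm_of_nonneg (by positivity)]
        gcongr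
        · exact (cCoef_pos α n).le
        · exact norm_sub_le _ _
    _ ≤ cCoef α n * (2 ^ ((k : ℝ) / 2) * (E * h ^ α + E * h ^ α)) := by
        gcongr
        · exact (cCoef_pos α n).le
        · simpa only [hma] using hE a m ha (by linarith) hma
        · simpa only [hbm] using hE m b (by linarith) hb hbm
    _ = E * (cCoef α n * (2 ^ ((k : ℝ) / 2) * (2 * h ^ α))) := by ring
    _ = E := by rw [cCoef_mul_eq_one α hn, mul_one]

lemma norm_sub_le_holderSemi_mul {α : ℝ} {F : ℝ → H} (hF : MemHolder α F) {s t : ℝ}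
    (hs : s ∈ Icc (0 : ℝ) 1) (ht : t ∈ Icc (0 : ℝ) 1) (hst : s < t) :
    ‖F t - F s‖ ≤ holderSemi α F * (t - s) ^ α := by
  have hpos : ∀ {s t : ℝ}, s < t → 0 < (t - s) ^ α := fun hst =>
    Real.rpow_pos_of_pos (sub_pos.2 hst) α
  obtain ⟨C, hC⟩ := hF
  have hbdd : BddAbove {r : ℝ | ∃ s ∈ Icc (0 : ℝ) 1, ∃ t ∈ Icc (0 : ℝ) 1,
      s < t ∧ r = ‖F t - F s‖ / (t - s) ^ α} := by
    refine ⟨C, ?_⟩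
    rintro r ⟨s, hs, t, ht, hst, rfl⟩
    rw [div_le_iff₀ (hpos hst), ← abs_of_pos (sub_pos.2 hst)]
    exact hC s hs t ht
  rw [← div_le_iff₀ (hpos hst)]
  exact le_csSup hbdd ⟨s, hs, t, ht, hst, rfl⟩

lemma cCoef_mul_norm_haarCoeff_le_holderSemi [NormedSpace ℝ H] {α : ℝ} {F : ℝ → H}
    (hF : MemHolder α F) (n : ℕ) : cCoef α n * ‖haarCoeff F n‖ ≤ holderSemi α F := by
  rcases eq_or_ne n 0 with rfl | hn
  · simpa [haarCoeff, cCoef] using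
      norm_sub_le_holderSemi_mul hF (left_mem_Icc.2 zero_le_one) (right_mem_Icc.2 zero_le_one)
        zero_lt_one
  · refine cCoef_mul_norm_haarCoeff_le α F hn _ fun s t hs ht hmesh => ?_
    have hst : s < t := sub_pos.1 (hmesh ▸ by positivity)
    exact norm_sub_le_holderSemi_mul hF ⟨hs, by linarith⟩ ⟨by linarith, ht⟩ hst

lemma tendsto_cCoef_mul_norm_haarCoeff [NormedSpace ℝ H] {α : ℝ} {F : ℝ → H}
    (hF : MemHolder0 α F) : Tendsto (fun n => cCoef α n * ‖haarCoeff F n‖) atTop (𝓝 0) := by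
  have hsmall : ∀ ε > 0, ∀ᶠ n in atTop, cCoef α n * ‖haarCoeff F n‖ ≤ ε := by
    intro ε hε
    obtain ⟨δ, hδ, hmod⟩ := hF.2.2 ε hε
    filter_upwards [tendsto_haarMesh_atTop.eventually (gt_mem_nhds hδ), eventually_ne_atTop 0]
      with n hmesh hn
    refine cCoef_mul_norm_haarCoeff_le α F hn ε fun s t hs ht hst => ?_
    have hpos : 0 < t - s := hst ▸ by positivity
    have := hmod s ⟨hs, by linarith⟩ t ⟨by linarith, ht⟩ (by linarith)
      (by rwa [abs_of_pos hpos, hst])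
    rwa [abs_of_pos hpos] at this
  refine tendsto_order.2 ⟨fun a ha => Eventually.of_forall fun n => ?_, fun a ha => ?_⟩
  · exact ha.trans_le (mul_nonneg (cCoef_pos α n).le (norm_nonneg _))
  · exact (hsmall (a / 2) (half_pos ha)).mono fun n hn => hn.trans_lt (half_lt_self ha)

end

theorem haarCoeff_bound_and_tendsto_general
    {H : Type*} [NormedAddCommGroup H] [InnerProductSpace ℝ H]
    (α : ℝ) (F : ℝ → H) (hF : MemHolder α F) :
    (∀ n : ℕ, ‖haarCoeff F n‖ ≤ holderSemi α F / cCoef α n) ∧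
    (MemHolder0 α F →
      Tendsto (fun n => cCoef α n * ‖haarCoeff F n‖) atTop (𝓝 0)) :=
  ⟨fun n => (le_div_iff₀' (cCoef_pos α n)).2 (cCoef_mul_norm_haarCoeff_le_holderSemi hF n),
    tendsto_cCoef_mul_norm_haarCoeff⟩

/-- **Bound on Haar coefficients of Hölder functions**: for `F ∈ C_α([0,1];H)`,
`‖∫_{[0,1]} χ_n dF‖ ≤ ‖F‖_α / c_n(α)`, and if moreover `F ∈ C_α^0([0,1];H)` then
`c_n(α) ‖∫_{[0,1]} χ_n dF‖ → 0` as `n → ∞`. -/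
theorem haarCoeff_bound_and_tendsto
    {H : Type*} [NormedAddCommGroup H] [InnerProductSpace ℝ H] [CompleteSpace H] [SecondCountableTopology H]
    (α : ℝ) (hα : α ∈ Ioo (0:ℝ) 1) (F : ℝ → H) (hF : MemHolder α F) :
    (∀ n : ℕ, ‖haarCoeff F n‖ ≤ holderSemi α F / cCoef α n) ∧
    (MemHolder0 α F →
      Tendsto (fun n => cCoef α n * ‖haarCoeff F n‖) atTop (𝓝 0)) :=
  haarCoeff_bound_and_tendsto_general α F hF

end SchilderHilbert
end
end

section
/- Let X be a Hausdorff topological space with Borel σ-algebra ℬ, let I: X → [0,∞] be a rate function (lower semicontinuous), and let (μ_ε)_{ε>0} be an exponentially tight family of Borel probability measures on X. Let 𝒢_0 be a collection of open subsets of X such that for every open G ⊂ X and every x ∈ G there exists G_0 ∈ 𝒢_0 with x ∈ G_0 ⊂ G. Assume that for every G ∈ 𝒢_0, lim_{ε→0} ε log μ_ε(G) = −inf_{x∈G} I(x). Then I is a good rate function and (μ_ε)_{ε>0} satisfies the large deviation principle with rate function I: for every closed F ⊂ X, limsup_{ε→0} ε log μ_ε(F) ≤ −inf_{x∈F} I(x),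 and for every open G ⊂ X, liminf_{ε→0} ε log μ_ε(G) ≥ −inf_{x∈G} I(x). -/
open MeasureTheory Filter Set Topology
open scoped ENNReal NNReal

noncomputable section

/-!
The lower bound is local: every point of an open set `G` has a basic neighbourhood `G₀ ⊆ G`,
whose exact asymptotics bound those of `G` from below. For the upper bound, lower
semicontinuity of `I` provides around each point a basic open set on which `I` stays almost as
large as at that point; since `ε log μ_ε` of a finite union is asymptotically the largest of
the terms, compactness turns these local bounds into the upper bound on compact sets, and
exponential tightness extends it to a closed set `F ⊆ (F ∩ K) ∪ Kᶜ`. Finally, the lower bound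
on the open set `Kᶜ` forces `I > a` off `K`, so every sublevel set is a closed subset of a
compact set.
-/

theorem EReal.le_coe_ennreal_iInf {ι : Sort*} {f : ι → ℝ≥0∞} {c : EReal}
    (h : ∀ i, c ≤ f i) : c ≤ ↑(⨅ i, f i) := by
  rcases le_total c 0 with hc | hc
  · exact hc.trans (EReal.coe_ennreal_nonneg _)
  · rw [← EReal.coe_toENNReal hc, EReal.coe_ennreal_le_coe_ennreal_iff]
    refine le_iInf fun i => ?_
    rw [← EReal.coe_ennreal_le_coe_ennreal_iff, EReal.coe_toENNReal hc]
    exact h i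

namespace SchilderHilbert

section ScaledLogMeasure

variable {X : Type*} [MeasurableSpace X] (μ : ℝ → Measure X)

def scaledLogMeasure (A : Set X) (ε : ℝ) : EReal :=
  ε * ENNReal.log (μ ε A)

variable {μ}

lemma scaledLogMeasure_mono {A B : Set X} (h : A ⊆ B) {ε : ℝ} (hε : 0 ≤ ε) :
    scaledLogMeasure μ A ε ≤ scaledLogMeasure μ B ε :=
  mul_le_mul_of_nonneg_left (ENNReal.log_monotone (measure_mono h)) (EReal.coe_nonneg.2 hε)

lemma limsup_scaledLogMeasure_mono {A B : Set X} (h : A ⊆ B) :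
    limsup (scaledLogMeasure μ A) (𝓝[>] 0) ≤ limsup (scaledLogMeasure μ B) (𝓝[>] 0) :=
  limsup_le_limsup <| eventually_mem_nhdsWithin.mono fun _ hε =>
    scaledLogMeasure_mono h (le_of_lt hε)

lemma liminf_scaledLogMeasure_mono {A B : Set X} (h : A ⊆ B) :
    liminf (scaledLogMeasure μ A) (𝓝[>] 0) ≤ liminf (scaledLogMeasure μ B) (𝓝[>] 0) :=
  liminf_le_liminf <| eventually_mem_nhdsWithin.mono fun _ hε =>
    scaledLogMeasure_mono h (le_of_lt hε)

lemma limsup_scaledLogMeasure_empty :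
    limsup (scaledLogMeasure μ ∅) (𝓝[>] 0) = ⊥ := by
  refine le_bot_iff.1 (limsup_le_of_le (by isBoundedDefault) ?_)
  filter_upwards [eventually_mem_nhdsWithin] with ε hε
  simp [scaledLogMeasure, EReal.coe_mul_bot_of_pos (show 0 < ε from hε)]

lemma scaledLogMeasure_union_le (A B : Set X) {ε : ℝ} (hε : 0 < ε) :
    scaledLogMeasure μ (A ∪ B) ε ≤
      ((ε * Real.log 2 : ℝ) : EReal) + max (scaledLogMeasure μ A ε) (scaledLogMeasure μ B ε) := by
  have hmass : μ ε (A ∪ B) ≤ 2 * max (μ ε A) (μ ε B) := calc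
    μ ε (A ∪ B) ≤ μ ε A + μ ε B := measure_union_le _ _
    _ ≤ 2 * max (μ ε A) (μ ε B) := by rw [two_mul]; gcongr <;> simp
  have hlog : ENNReal.log (μ ε (A ∪ B)) ≤
      (Real.log 2 : EReal) + max (ENNReal.log (μ ε A)) (ENNReal.log (μ ε B)) := by
    refine (ENNReal.log_monotone hmass).trans_eq ?_
    rw [ENNReal.log_mul_add, ENNReal.log_monotone.map_max, ← ENNReal.ofReal_ofNat 2,
      ENNReal.log_ofReal_of_pos two_pos]
  have hε' : (0 : EReal) ≤ ε := EReal.coe_nonneg.2 hε.le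
  calc scaledLogMeasure μ (A ∪ B) ε
      ≤ ε * ((Real.log 2 : EReal) + max (ENNReal.log (μ ε A)) (ENNReal.log (μ ε B))) :=
        mul_le_mul_of_nonneg_left hlog hε'
    _ = _ := by
        rw [EReal.left_distrib_of_nonneg_of_ne_top hε' (EReal.coe_ne_top ε), EReal.coe_mul,
          (monotone_mul_left_of_nonneg hε').map_max]
        rfl

lemma limsup_scaledLogMeasure_union_le (A B : Set X) :
    limsup (scaledLogMeasure μ (A ∪ B)) (𝓝[>] 0) ≤
      max (limsup (scaledLogMeasure μ A) (𝓝[>] 0)) (limsup (scaledLogMeasure μ B) (𝓝[>] 0)) := by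
  have hvanish : Tendsto (fun ε : ℝ => ((ε * Real.log 2 : ℝ) : EReal)) (𝓝[>] 0) (𝓝 0) := by
    exact EReal.tendsto_coe.2 <| tendsto_nhdsWithin_of_tendsto_nhds <|
      (continuous_id.mul continuous_const).tendsto' 0 0 (zero_mul _)
  calc limsup (scaledLogMeasure μ (A ∪ B)) (𝓝[>] 0)
      ≤ limsup (fun ε : ℝ => ((ε * Real.log 2 : ℝ) : EReal) +
          max (scaledLogMeasure μ A ε) (scaledLogMeasure μ B ε)) (𝓝[>] 0) :=
        limsup_le_limsup <| eventually_mem_nhdsWithin.mono fun _ hε =>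
          scaledLogMeasure_union_le A B hε
    _ ≤ 0 + limsup (fun ε => max (scaledLogMeasure μ A ε) (scaledLogMeasure μ B ε)) (𝓝[>] 0) := by
        have h0 := hvanish.limsup_eq
        rw [← h0]
        exact EReal.limsup_add_le (.inl (h0 ▸ EReal.zero_ne_bot)) (.inl (h0 ▸ EReal.zero_ne_top))
    _ = _ := by rw [zero_add, limsup_max]

lemma limsup_scaledLogMeasure_le_of_isCompact [TopologicalSpace X] {K : Set X}
    (hK : IsCompact K) {c : EReal}
    (h : ∀ x ∈ K, ∃ U ∈ 𝓝 x, limsup (scaledLogMeasure μ U) (𝓝[>] 0) ≤ c) :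
    limsup (scaledLogMeasure μ K) (𝓝[>] 0) ≤ c := by
  refine hK.induction_on (p := fun A => limsup (scaledLogMeasure μ A) (𝓝[>] 0) ≤ c)
    (by simp [limsup_scaledLogMeasure_empty]) (fun A B hAB hB => ?_) (fun A B hA hB => ?_)
    fun x hx => ?_
  · exact (limsup_scaledLogMeasure_mono hAB).trans hB
  · exact (limsup_scaledLogMeasure_union_le A B).trans (max_le hA hB)
  · obtain ⟨U, hU, hUc⟩ := h x hx
    exact ⟨U, mem_nhdsWithin_of_mem_nhds hU, hUc⟩

def IsExpTight [TopologicalSpace X] (μ : ℝ → Measure X) : Prop :=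
  ∀ a : ℝ, 0 < a → ∃ K : Set X, IsCompact K ∧
    limsup (scaledLogMeasure μ Kᶜ) (𝓝[>] 0) < -(a : EReal)

end ScaledLogMeasure

section RateFunction

variable {X : Type*} [TopologicalSpace X] [MeasurableSpace X] {μ : ℝ → Measure X}
  {I : X → ℝ≥0∞} {G0 : Set (Set X)}

lemma neg_iInf_le_liminf_of_basis
    (hbasis : ∀ G : Set X, IsOpen G → ∀ x ∈ G, ∃ G₀ ∈ G0, x ∈ G₀ ∧ G₀ ⊆ G)
    (hlim : ∀ G ∈ G0, Tendsto (scaledLogMeasure μ G) (𝓝[>] 0) (𝓝 (-↑(⨅ x ∈ G, I x))))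
    {G : Set X} (hG : IsOpen G) :
    -↑(⨅ x ∈ G, I x) ≤ liminf (scaledLogMeasure μ G) (𝓝[>] 0) := by
  rw [EReal.neg_le]
  refine EReal.le_coe_ennreal_iInf fun x => EReal.le_coe_ennreal_iInf fun hx => ?_
  obtain ⟨G₀, hG₀, hxG₀, hG₀G⟩ := hbasis G hG x hx
  rw [EReal.neg_le]
  calc -↑(I x) ≤ -↑(⨅ y ∈ G₀, I y) :=
        EReal.neg_le_neg_iff.2 (EReal.coe_ennreal_le_coe_ennreal_iff.2 (iInf₂_le x hxG₀))
    _ = liminf (scaledLogMeasure μ G₀) (𝓝[>] 0) := (hlim G₀ hG₀).liminf_eq.symm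
    _ ≤ liminf (scaledLogMeasure μ G) (𝓝[>] 0) := liminf_scaledLogMeasure_mono hG₀G

lemma exists_mem_basis_limsup_le (hI : LowerSemicontinuous I)
    (hbasis : ∀ G : Set X, IsOpen G → ∀ x ∈ G, ∃ G₀ ∈ G0, x ∈ G₀ ∧ G₀ ⊆ G)
    (hlim : ∀ G ∈ G0, Tendsto (scaledLogMeasure μ G) (𝓝[>] 0) (𝓝 (-↑(⨅ x ∈ G, I x))))
    {x : X} {b : EReal} (hb : -b < I x) :
    ∃ G ∈ G0, x ∈ G ∧ limsup (scaledLogMeasure μ G) (𝓝[>] 0) ≤ b := by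
  have hI' : LowerSemicontinuous fun y => (I y : EReal) :=
    continuous_coe_ennreal_ereal.comp_lowerSemicontinuous hI
      fun _ _ => EReal.coe_ennreal_le_coe_ennreal_iff.2
  obtain ⟨U, hU, hUopen, hxU⟩ := eventually_nhds_iff.1 (hI' x _ hb)
  obtain ⟨G, hG, hxG, hGU⟩ := hbasis U hUopen x hxU
  refine ⟨G, hG, hxG, ?_⟩
  rw [(hlim G hG).limsup_eq, EReal.neg_le]
  exact EReal.le_coe_ennreal_iInf fun y => EReal.le_coe_ennreal_iInf fun hy => (hU y (hGU hy)).le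

lemma limsup_le_neg_iInf_of_isCompact (hI : LowerSemicontinuous I) (hG0open : ∀ G ∈ G0, IsOpen G)
    (hbasis : ∀ G : Set X, IsOpen G → ∀ x ∈ G, ∃ G₀ ∈ G0, x ∈ G₀ ∧ G₀ ⊆ G)
    (hlim : ∀ G ∈ G0, Tendsto (scaledLogMeasure μ G) (𝓝[>] 0) (𝓝 (-↑(⨅ x ∈ G, I x))))
    {K : Set X} (hK : IsCompact K) :
    limsup (scaledLogMeasure μ K) (𝓝[>] 0) ≤ -↑(⨅ x ∈ K, I x) := by
  refine EReal.le_of_forall_lt_iff_le.1 fun b hb =>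
    limsup_scaledLogMeasure_le_of_isCompact hK fun x hx => ?_
  have hbx : -(b : EReal) < I x := (EReal.neg_lt_comm.1 hb).trans_le
    (EReal.coe_ennreal_le_coe_ennreal_iff.2 (iInf₂_le x hx))
  obtain ⟨G, hG, hxG, hGb⟩ := exists_mem_basis_limsup_le hI hbasis hlim hbx
  exact ⟨G, (hG0open G hG).mem_nhds hxG, hGb⟩

lemma limsup_le_neg_iInf_of_isClosed (htight : IsExpTight μ)
    (hcompact : ∀ K : Set X, IsCompact K →
      limsup (scaledLogMeasure μ K) (𝓝[>] 0) ≤ -↑(⨅ x ∈ K, I x))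
    {F : Set X} (hF : IsClosed F) :
    limsup (scaledLogMeasure μ F) (𝓝[>] 0) ≤ -↑(⨅ x ∈ F, I x) := by
  refine EReal.le_of_forall_lt_iff_le.1 fun b hb => ?_
  obtain ⟨K, hK, hKc⟩ := htight (max 1 (-b)) (lt_max_of_lt_left one_pos)
  have hFK : F ⊆ (F ∩ K) ∪ Kᶜ := fun x hx => (em (x ∈ K)).imp (fun h => ⟨hx, h⟩) id
  have hFK_le : limsup (scaledLogMeasure μ (F ∩ K)) (𝓝[>] 0) ≤ b :=
    (hcompact _ (hK.inter_left hF)).trans <| le_trans (EReal.neg_le_neg_iff.2 <|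
      EReal.coe_ennreal_le_coe_ennreal_iff.2 <| biInf_mono fun _ hx => hx.1) hb.le
  have hKc_le : limsup (scaledLogMeasure μ Kᶜ) (𝓝[>] 0) ≤ b := by
    refine hKc.le.trans ?_
    rw [← EReal.coe_neg, EReal.coe_le_coe_iff]
    linarith [le_max_right 1 (-b)]
  exact (limsup_scaledLogMeasure_mono hFK).trans <|
    (limsup_scaledLogMeasure_union_le _ _).trans (max_le hFK_le hKc_le)

lemma isCompact_setOf_le_of_isExpTight [T2Space X] (hI : LowerSemicontinuous I)
    (htight : IsExpTight μ)
    (hlower : ∀ G : Set X, IsOpen G →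
      -↑(⨅ x ∈ G, I x) ≤ liminf (scaledLogMeasure μ G) (𝓝[>] 0))
    {c : ℝ≥0∞} (hc : c ≠ ⊤) :
    IsCompact {x | I x ≤ c} := by
  obtain ⟨K, hK, hKc⟩ := htight (c.toReal + 1) (by positivity)
  refine hK.of_isClosed_subset (hI.isClosed_preimage c) fun x hxc => by_contra fun hxK => ?_
  have hlt : ((c.toReal + 1 : ℝ) : EReal) < ↑(⨅ y ∈ Kᶜ, I y) :=
    EReal.neg_lt_neg_iff.1 <|
      (hlower _ hK.isClosed.isOpen_compl).trans_lt (lt_of_le_of_lt liminf_le_limsup hKc)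
  have hle : ((c.toReal + 1 : ℝ) : EReal) ≤ c.toReal := by
    rw [EReal.coe_ennreal_toReal hc]
    exact hlt.le.trans (EReal.coe_ennreal_le_coe_ennreal_iff.2 ((iInf₂_le x hxK).trans hxc))
  linarith [EReal.coe_le_coe_iff.1 hle]

end RateFunction

theorem ldp_from_basis_general
    {X : Type*} [TopologicalSpace X] [T2Space X] [MeasurableSpace X]
    (I : X → ℝ≥0∞) (hI : LowerSemicontinuous I)
    (μ : ℝ → Measure X)
    (htight : ∀ a : ℝ, 0 < a → ∃ K : Set X, IsCompact K ∧
      Filter.limsup (fun ε : ℝ => (ε : EReal) * ENNReal.log (μ ε Kᶜ)) (𝓝[>] (0:ℝ))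
        < -(a : EReal))
    (G0 : Set (Set X)) (hG0open : ∀ G ∈ G0, IsOpen G)
    (hbasis : ∀ G : Set X, IsOpen G → ∀ x ∈ G, ∃ G₀ ∈ G0, x ∈ G₀ ∧ G₀ ⊆ G)
    (hlim : ∀ G ∈ G0,
      Tendsto (fun ε : ℝ => (ε : EReal) * ENNReal.log (μ ε G)) (𝓝[>] (0:ℝ))
        (𝓝 (-((⨅ x ∈ G, I x : ℝ≥0∞) : EReal)))) :
    -- `I` is a good rate function
    (∀ C : ℝ, 0 ≤ C → IsCompact {x : X | I x ≤ ENNReal.ofReal C}) ∧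
    -- large deviations upper bound for closed sets
    (∀ F : Set X, IsClosed F →
      Filter.limsup (fun ε : ℝ => (ε : EReal) * ENNReal.log (μ ε F)) (𝓝[>] (0:ℝ))
        ≤ -((⨅ x ∈ F, I x : ℝ≥0∞) : EReal)) ∧
    -- large deviations lower bound for open sets
    (∀ G : Set X, IsOpen G →
      -((⨅ x ∈ G, I x : ℝ≥0∞) : EReal)
        ≤ Filter.liminf (fun ε : ℝ => (ε : EReal) * ENNReal.log (μ ε G)) (𝓝[>] (0:ℝ))) := by
  have hlower : ∀ G : Set X, IsOpen G →
      -↑(⨅ x ∈ G, I x) ≤ liminf (scaledLogMeasure μ G) (𝓝[>] 0) :=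
    fun G hG => neg_iInf_le_liminf_of_basis hbasis hlim hG
  have hcompact : ∀ K : Set X, IsCompact K →
      limsup (scaledLogMeasure μ K) (𝓝[>] 0) ≤ -↑(⨅ x ∈ K, I x) :=
    fun K hK => limsup_le_neg_iInf_of_isCompact hI hG0open hbasis hlim hK
  exact ⟨fun C _ => isCompact_setOf_le_of_isExpTight hI htight hlower ENNReal.ofReal_ne_top,
    fun F hF => limsup_le_neg_iInf_of_isClosed htight hcompact hF, hlower⟩

/-- **LDP from a sub-basis of the topology** (Proposition 7): if `I` is a rate
function (lower semicontinuous, `[0,∞]`-valued), `(μ_ε)_{ε>0}` an exponentially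
tight family of Borel probability measures on a Hausdorff space `X`, `𝒢₀` a
collection of open sets such that every point of every open set has a
`𝒢₀`-neighborhood inside it, and if `lim_{ε→0} ε log μ_ε(G) = -inf_G I` for every
`G ∈ 𝒢₀`, then `I` is a good rate function and `(μ_ε)` satisfies the LDP with rate
function `I`. Here `ε log μ_ε(A)` is the extended real `ε · log(μ_ε A)`, with
`log 0 = -∞`. -/
theorem ldp_from_basis
    {X : Type*} [TopologicalSpace X] [T2Space X] [MeasurableSpace X] [BorelSpace X]
    (I : X → ℝ≥0∞) (hI : LowerSemicontinuous I)
    (μ : ℝ → Measure X) (hprob : ∀ ε : ℝ, 0 < ε → IsProbabilityMeasure (μ ε))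
    (htight : ∀ a : ℝ, 0 < a → ∃ K : Set X, IsCompact K ∧
      Filter.limsup (fun ε : ℝ => (ε : EReal) * ENNReal.log (μ ε Kᶜ)) (𝓝[>] (0:ℝ))
        < -(a : EReal))
    (G0 : Set (Set X)) (hG0open : ∀ G ∈ G0, IsOpen G)
    (hbasis : ∀ G : Set X, IsOpen G → ∀ x ∈ G, ∃ G₀ ∈ G0, x ∈ G₀ ∧ G₀ ⊆ G)
    (hlim : ∀ G ∈ G0,
      Tendsto (fun ε : ℝ => (ε : EReal) * ENNReal.log (μ ε G)) (𝓝[>] (0:ℝ))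
        (𝓝 (-((⨅ x ∈ G, I x : ℝ≥0∞) : EReal)))) :
    -- `I` is a good rate function
    (∀ C : ℝ, 0 ≤ C → IsCompact {x : X | I x ≤ ENNReal.ofReal C}) ∧
    -- large deviations upper bound for closed sets
    (∀ F : Set X, IsClosed F →
      Filter.limsup (fun ε : ℝ => (ε : EReal) * ENNReal.log (μ ε F)) (𝓝[>] (0:ℝ))
        ≤ -((⨅ x ∈ F, I x : ℝ≥0∞) : EReal)) ∧
    -- large deviations lower bound for open sets
    (∀ G : Set X, IsOpen G →
      -((⨅ x ∈ G, I x : ℝ≥0∞) : EReal)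
        ≤ Filter.liminf (fun ε : ℝ => (ε : EReal) * ENNReal.log (μ ε G)) (𝓝[>] (0:ℝ))) :=
  ldp_from_basis_general I hI μ htight G0 hG0open hbasis hlim

end SchilderHilbert
end
end

section
/- Let 0 < α < 1/2 and let G ∈ C_α^0([0,1];ℝ) have Schauder coefficients G_n = c_n(α) ∫_{[0,1]} χ_n dG, n ≥ 0. Then Ĩ(G) < ∞ if and only if Σ_{n=0}^∞ G_n² / c_n(α)² < ∞, and in that case Ĩ(G) = Σ_{n=0}^∞ G_n² / (2 c_n(α)²). -/
open MeasureTheory Filter Set Topology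
open scoped ENNReal NNReal

noncomputable section

namespace SchilderHilbert

/-- The rate function of scalar Brownian motion:
`Ĩ(f) = (1/2)∫_0^1 |ḟ(s)|² ds` if `f(t) = ∫_0^t ḟ(s) ds` on `[0,1]` for a square
integrable `ḟ`, and `Ĩ(f) = ∞` otherwise. -/
noncomputable def rateI1 (f : ℝ → ℝ) : ℝ≥0∞ :=
  ⨅ (u : ℝ → ℝ) (_ : AEStronglyMeasurable u (volume.restrict (Icc (0:ℝ) 1)))
    (_ : ∀ t ∈ Icc (0:ℝ) 1, f t = ∫ s in (0:ℝ)..t, u s),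
    (1/2 : ℝ≥0∞) * ∫⁻ s in Icc (0:ℝ) 1, ENNReal.ofReal ((u s) ^ 2)

/-!
The Haar functions `χ_n` form a Hilbert basis of `L²[0,1]`. Orthonormality is a computation on
dyadic intervals. Completeness: if `u ⊥ χ_n` for all `n`, its primitive `U` has `U(0) = 0` and
all Haar coefficients `∫ χ_n dU = ∫ χ_n u` zero, so `U` vanishes at the dyadic rationals, hence on
`[0,1]`, and `u = U' = 0` a.e. by Lebesgue differentiation.

If `G = ∫_0^· u` with `u ∈ L²`, then `∫ χ_n dG = ⟪χ_n, u⟫`, so Parseval gives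
`∫ u² = Σ (∫ χ_n dG)²`. Conversely, square-summable coefficients define some `u ∈ L²` whose
primitive has the Haar coefficients of `G`, hence equals `G` by the same uniqueness argument.
Thus `Ĩ(G) = ½ Σ (∫ χ_n dG)²` for every continuous `G` with `G(0) = 0`, and the weights
`c_n(α) ≠ 0` cancel.
-/

local notation "μ₀₁" => (volume.restrict (Icc (0:ℝ) 1) : Measure ℝ)

lemma haarK_two_pow_add {k l : ℕ} (hl : l < 2 ^ k) : haarK (2 ^ k + l) = k :=
  Nat.log_eq_of_pow_le_of_lt_pow (Nat.le_add_right _ _) (by rw [pow_succ]; omega)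

lemma haarL_two_pow_add {k l : ℕ} (hl : l < 2 ^ k) : haarL (2 ^ k + l) = l := by
  rw [haarL, ← haarK, haarK_two_pow_add hl]
  omega

lemma exists_eq_two_pow_add {n : ℕ} (hn : n ≠ 0) : ∃ k l, l < 2 ^ k ∧ n = 2 ^ k + l := by
  have h₁ : 2 ^ Nat.log 2 n ≤ n := Nat.pow_log_le_self 2 hn
  have h₂ : n < 2 ^ (Nat.log 2 n + 1) := Nat.lt_pow_succ_log_self one_lt_two n
  rw [pow_succ] at h₂
  exact ⟨Nat.log 2 n, n - 2 ^ Nat.log 2 n, by omega, by omega⟩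

def haarLeft (k l : ℕ) : ℝ := (2 * l : ℝ) / 2 ^ (k + 1)

def haarMid (k l : ℕ) : ℝ := (2 * l + 1 : ℝ) / 2 ^ (k + 1)

def haarRight (k l : ℕ) : ℝ := (2 * l + 2 : ℝ) / 2 ^ (k + 1)

def haarHeight (k : ℕ) : ℝ := 2 ^ ((k : ℝ) / 2)

lemma haarHeight_pos (k : ℕ) : 0 < haarHeight k := Real.rpow_pos_of_pos two_pos _

lemma haarHeight_mul_self (k : ℕ) : haarHeight k * haarHeight k = 2 ^ k := by
  rw [haarHeight, ← Real.rpow_add two_pos, add_halves, Real.rpow_natCast]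

lemma haarMid_sub_haarLeft (k l : ℕ) : haarMid k l - haarLeft k l = 1 / 2 ^ (k + 1) := by
  rw [haarMid, haarLeft, div_sub_div_same]; ring_nf

lemma haarRight_sub_haarMid (k l : ℕ) : haarRight k l - haarMid k l = 1 / 2 ^ (k + 1) := by
  rw [haarRight, haarMid, div_sub_div_same]; ring_nf

lemma haarLeft_lt_haarMid (k l : ℕ) : haarLeft k l < haarMid k l := by
  rw [← sub_pos, haarMid_sub_haarLeft]; positivity

lemma haarMid_lt_haarRight (k l : ℕ) : haarMid k l < haarRight k l := by
  rw [← sub_pos, haarRight_sub_haarMid]; positivity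

lemma Icc_haarLeft_haarRight_subset {k l : ℕ} (hl : l < 2 ^ k) :
    Icc (haarLeft k l) (haarRight k l) ⊆ Icc 0 1 := by
  have hleft : 0 ≤ haarLeft k l := by unfold haarLeft; positivity
  have hright : haarRight k l ≤ 1 := by
    have : (l : ℝ) + 1 ≤ 2 ^ k := by exact_mod_cast hl
    rw [haarRight, div_le_one (by positivity), pow_succ]
    linarith
  exact Icc_subset_Icc hleft hright

lemma haar_zero : haar 0 = 1 := by
  ext t; simp [haar]

lemma haar_two_pow_add {k l : ℕ} (hl : l < 2 ^ k) (t : ℝ) :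
    haar (2 ^ k + l) t =
      if haarLeft k l ≤ t ∧ t < haarMid k l then haarHeight k
      else if haarMid k l ≤ t ∧ t ≤ haarRight k l then -haarHeight k else 0 := by
  rw [haar, if_neg (by positivity), haarK_two_pow_add hl, haarL_two_pow_add hl]
  rfl

lemma haar_two_pow_add_eq_indicator {k l : ℕ} (hl : l < 2 ^ k) (t : ℝ) :
    haar (2 ^ k + l) t =
      haarHeight k * (Ico (haarLeft k l) (haarMid k l)).indicator 1 t
        - haarHeight k * (Icc (haarMid k l) (haarRight k l)).indicator 1 t := by
  simp only [haar_two_pow_add hl, indicator_apply, mem_Ico, mem_Icc, Pi.one_apply]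
  split_ifs <;> grind

lemma haar_mul_self_two_pow_add {k l : ℕ} (hl : l < 2 ^ k) (t : ℝ) :
    haar (2 ^ k + l) t * haar (2 ^ k + l) t =
      2 ^ k * (Icc (haarLeft k l) (haarRight k l)).indicator 1 t := by
  have := haarLeft_lt_haarMid k l
  have := haarMid_lt_haarRight k l
  have := haarHeight_mul_self k
  simp only [haar_two_pow_add hl, indicator_apply, mem_Icc, Pi.one_apply]
  split_ifs <;> grind

lemma haarCoeff_two_pow_add {H : Type*} [NormedAddCommGroup H] [NormedSpace ℝ H]
    (F : ℝ → H) {k l : ℕ} (hl : l < 2 ^ k) :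
    haarCoeff F (2 ^ k + l) =
      haarHeight k • ((2 : ℝ) • F (haarMid k l) - F (haarRight k l) - F (haarLeft k l)) := by
  rw [haarCoeff, if_neg (by positivity), haarK_two_pow_add hl, haarL_two_pow_add hl]
  rfl

lemma measurable_haar (n : ℕ) : Measurable (haar n) := by
  rcases eq_or_ne n 0 with rfl | hn
  · exact haar_zero ▸ measurable_one
  obtain ⟨k, l, hl, rfl⟩ := exists_eq_two_pow_add hn
  rw [funext (haar_two_pow_add_eq_indicator hl)]
  exact ((measurable_one.indicator measurableSet_Ico).const_mul _).sub
    ((measurable_one.indicator measurableSet_Icc).const_mul _)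

lemma abs_haar_le (n : ℕ) (t : ℝ) : |haar n t| ≤ haarHeight (haarK n) := by
  rcases eq_or_ne n 0 with rfl | hn
  · simp [haar_zero, haarK, haarHeight]
  obtain ⟨k, l, hl, rfl⟩ := exists_eq_two_pow_add hn
  have := haarHeight_pos k
  rw [haarK_two_pow_add hl, haar_two_pow_add hl]
  split_ifs <;> simp [abs_of_pos this, this.le]

lemma memLp_haar (n : ℕ) (p : ℝ≥0∞) (μ : Measure ℝ) [IsFiniteMeasure μ] :
    MemLp (haar n) p μ :=
  memLp_of_bounded (Eventually.of_forall fun t => abs_le.mp (abs_haar_le n t))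
    (measurable_haar n).aestronglyMeasurable p

lemma integral_indicator_one_of_subset {S : Set ℝ} (hS : MeasurableSet S) (hS01 : S ⊆ Icc 0 1) :
    ∫ x, S.indicator 1 x ∂μ₀₁ = volume.real S := by
  rw [integral_indicator_one hS, measureReal_restrict_apply hS, inter_eq_left.mpr hS01]

lemma integral_haar {n : ℕ} (hn : n ≠ 0) : ∫ x, haar n x ∂μ₀₁ = 0 := by
  obtain ⟨k, l, hl, rfl⟩ := exists_eq_two_pow_add hn
  have hsub := Icc_haarLeft_haarRight_subset hl
  have hmid := haarMid_lt_haarRight k l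
  simp_rw [haar_two_pow_add_eq_indicator hl]
  rw [integral_sub (((integrable_const 1).indicator measurableSet_Ico).const_mul _)
      (((integrable_const 1).indicator measurableSet_Icc).const_mul _),
    integral_const_mul, integral_const_mul,
    integral_indicator_one_of_subset measurableSet_Ico
      ((Ico_subset_Icc_self.trans (Icc_subset_Icc_right hmid.le)).trans hsub),
    integral_indicator_one_of_subset measurableSet_Icc
      ((Icc_subset_Icc_left (haarLeft_lt_haarMid k l).le).trans hsub),
    Real.volume_real_Ico_of_le (haarLeft_lt_haarMid k l).le, Real.volume_real_Icc_of_le hmid.le,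
    haarMid_sub_haarLeft, haarRight_sub_haarMid, sub_self]

lemma integral_haar_mul_self (n : ℕ) : ∫ x, haar n x * haar n x ∂μ₀₁ = 1 := by
  rcases eq_or_ne n 0 with rfl | hn
  · simp [haar_zero]
  obtain ⟨k, l, hl, rfl⟩ := exists_eq_two_pow_add hn
  have hlen : haarRight k l - haarLeft k l = 2 / 2 ^ (k + 1) := by
    linear_combination haarMid_sub_haarLeft k l + haarRight_sub_haarMid k l
  simp_rw [haar_mul_self_two_pow_add hl]
  rw [integral_const_mul, integral_indicator_one_of_subset measurableSet_Icc
      (Icc_haarLeft_haarRight_subset hl),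
    Real.volume_real_Icc_of_le ((haarLeft_lt_haarMid k l).trans (haarMid_lt_haarRight k l)).le,
    hlen, pow_succ]
  field_simp

lemma haar_eq_of_breakpoints_notMem_Ioo {k l : ℕ} (hl : l < 2 ^ k) {s t : ℝ}
    (h : ∀ c ∈ ({haarLeft k l, haarMid k l, haarRight k l} : Set ℝ), c ≤ s ∨ t ≤ c)
    {x y : ℝ} (hx : x ∈ Ioo s t) (hy : y ∈ Ioo s t) :
    haar (2 ^ k + l) x = haar (2 ^ k + l) y := by
  have ha := h (haarLeft k l) (by simp)
  have hm := h (haarMid k l) (by simp)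
  have hb := h (haarRight k l) (by simp)
  rw [mem_Ioo] at hx hy
  rw [haar_two_pow_add hl, haar_two_pow_add hl]
  split_ifs <;> grind

lemma dyadic_le_haarLeft_or_haarRight_le {K l' q : ℕ} (hq : q ≠ 2 * l' + 1) :
    (q : ℝ) / 2 ^ (K + 1) ≤ haarLeft K l' ∨ haarRight K l' ≤ (q : ℝ) / 2 ^ (K + 1) := by
  rcases (by omega : q ≤ 2 * l' ∨ 2 * l' + 2 ≤ q) with h | h
  · left; rw [haarLeft]; gcongr; exact_mod_cast h
  · right; rw [haarRight]; gcongr; exact_mod_cast h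

/-- The breakpoints of a Haar function of level `k ≤ K` lie on the grid `2^{-(K+1)} ℕ` with
numerators other than `2 l' + 1`, so they avoid the open support of `χ_{2^K + l'}`. -/
lemma haar_eq_on_Ioo_of_le {k l K l' : ℕ} (hl : l < 2 ^ k) (hkK : k ≤ K) (hne : (k, l) ≠ (K, l'))
    {x y : ℝ} (hx : x ∈ Ioo (haarLeft K l') (haarRight K l'))
    (hy : y ∈ Ioo (haarLeft K l') (haarRight K l')) :
    haar (2 ^ k + l) x = haar (2 ^ k + l) y := by
  obtain ⟨e, rfl⟩ := Nat.exists_eq_add_of_le hkK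
  refine haar_eq_of_breakpoints_notMem_Ioo hl ?_ hx hy
  have hgrid : ∀ p : ℕ, p * 2 ^ e ≠ 2 * l' + 1 →
      (p : ℝ) / 2 ^ (k + 1) ≤ haarLeft (k + e) l' ∨
        haarRight (k + e) l' ≤ (p : ℝ) / 2 ^ (k + 1) := by
    intro p hp
    have hscale : (p : ℝ) / 2 ^ (k + 1) = ((p * 2 ^ e : ℕ) : ℝ) / 2 ^ (k + e + 1) := by
      push_cast
      rw [show k + e + 1 = k + 1 + e by ring, pow_add]
      field_simp
      ring
    rw [hscale]
    exact dyadic_le_haarLeft_or_haarRight_le hp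
  have hodd : ∀ p : ℕ, Even p → p ≠ 2 * l' + 1 := fun p hp h =>
    Nat.not_even_two_mul_add_one l' (h ▸ hp)
  simp only [mem_insert_iff, mem_singleton_iff, forall_eq_or_imp, forall_eq]
  refine ⟨?_, ?_, ?_⟩
  · have := hgrid (2 * l) (hodd _ ((even_two_mul l).mul_right _))
    simpa [haarLeft] using this
  · have hmid : (2 * l + 1) * 2 ^ e ≠ 2 * l' + 1 := by
      rcases e with _ | e
      · intro h
        exact hne (by simp only [Prod.mk.injEq]; omega)
      · exact hodd _ (by rw [pow_succ]; exact (even_two.mul_left _).mul_left _)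
    simpa [haarMid] using hgrid _ hmid
  · have := hgrid (2 * (l + 1)) (hodd _ ((even_two_mul _).mul_right _))
    simpa [haarRight, mul_add] using this

lemma haar_two_pow_add_eq_zero {k l : ℕ} (hl : l < 2 ^ k) {t : ℝ}
    (ht : t ∉ Icc (haarLeft k l) (haarRight k l)) : haar (2 ^ k + l) t = 0 := by
  have := haarLeft_lt_haarMid k l
  have := haarMid_lt_haarRight k l
  rw [mem_Icc] at ht
  rw [haar_two_pow_add hl]
  split_ifs <;> grind

lemma integral_mul_haar_eq_zero {f : ℝ → ℝ} {K l' : ℕ} (hl' : l' < 2 ^ K) {c : ℝ}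
    (hf : ∀ x ∈ Ioo (haarLeft K l') (haarRight K l'), f x = c) :
    ∫ x, f x * haar (2 ^ K + l') x ∂μ₀₁ = 0 := by
  have hae : (fun x => f x * haar (2 ^ K + l') x) =ᵐ[μ₀₁] fun x => c * haar (2 ^ K + l') x := by
    refine ae_restrict_of_ae ?_
    filter_upwards [(toFinite {haarLeft K l', haarRight K l'}).countable.ae_notMem volume]
      with x hx
    by_cases hxs : x ∈ Ioo (haarLeft K l') (haarRight K l')
    · rw [hf x hxs]
    · have hx' : x ∉ Icc (haarLeft K l') (haarRight K l') := by
        rw [← Icc_sdiff_both, Set.mem_sdiff] at hxs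
        grind
      simp [haar_two_pow_add_eq_zero hl' hx']
  rw [integral_congr_ae hae, integral_const_mul, integral_haar (by positivity), mul_zero]

lemma integral_haar_mul_haar_of_ne {i j : ℕ} (hij : i ≠ j) :
    ∫ x, haar i x * haar j x ∂μ₀₁ = 0 := by
  wlog hle : haarK i ≤ haarK j generalizing i j
  · simpa only [mul_comm] using this hij.symm (le_of_not_ge hle)
  rcases eq_or_ne j 0 with rfl | hj
  · simpa [haar_zero] using integral_haar hij
  obtain ⟨K, l', hl', rfl⟩ := exists_eq_two_pow_add hj
  have hmid : haarMid K l' ∈ Ioo (haarLeft K l') (haarRight K l') :=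
    ⟨haarLeft_lt_haarMid K l', haarMid_lt_haarRight K l'⟩
  rcases eq_or_ne i 0 with rfl | hi
  · exact integral_mul_haar_eq_zero hl' (c := 1) fun x _ => by simp [haar_zero]
  obtain ⟨k, l, hl, rfl⟩ := exists_eq_two_pow_add hi
  rw [haarK_two_pow_add hl, haarK_two_pow_add hl'] at hle
  exact integral_mul_haar_eq_zero hl' fun x hx =>
    haar_eq_on_Ioo_of_le hl hle (by rintro ⟨rfl, rfl⟩; exact hij rfl) hx hmid

def haarLp (n : ℕ) : Lp ℝ 2 μ₀₁ := (memLp_haar n 2 μ₀₁).toLp (haar n)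

lemma coeFn_haarLp (n : ℕ) : haarLp n =ᵐ[μ₀₁] haar n := (memLp_haar n 2 μ₀₁).coeFn_toLp

lemma inner_haarLp (n : ℕ) (f : Lp ℝ 2 μ₀₁) :
    inner ℝ (haarLp n) f = ∫ x, haar n x * f x ∂μ₀₁ := by
  rw [L2.inner_def]
  refine integral_congr_ae ?_
  filter_upwards [coeFn_haarLp n] with x hx
  simp [hx, mul_comm]

lemma orthonormal_haarLp : Orthonormal ℝ haarLp := by
  rw [orthonormal_iff_ite]
  intro i j
  have hij : inner ℝ (haarLp i) (haarLp j) = ∫ x, haar i x * haar j x ∂μ₀₁ := by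
    rw [inner_haarLp]
    refine integral_congr_ae ?_
    filter_upwards [coeFn_haarLp j] with x hx
    rw [hx]
  split_ifs with h
  · rw [hij, h, integral_haar_mul_self]
  · rw [hij, integral_haar_mul_haar_of_ne h]

section VectorValued

variable {H : Type*} [NormedAddCommGroup H] [NormedSpace ℝ H]

lemma haarCoeff_congr {F G : ℝ → H} (h : EqOn F G (Icc 0 1)) (n : ℕ) :
    haarCoeff F n = haarCoeff G n := by
  rcases eq_or_ne n 0 with rfl | hn
  · simp [haarCoeff, h (left_mem_Icc.mpr zero_le_one), h (right_mem_Icc.mpr zero_le_one)]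
  obtain ⟨k, l, hl, rfl⟩ := exists_eq_two_pow_add hn
  have hsub := Icc_haarLeft_haarRight_subset hl
  have hm := haarMid_lt_haarRight k l
  have ha := haarLeft_lt_haarMid k l
  rw [haarCoeff_two_pow_add _ hl, haarCoeff_two_pow_add _ hl,
    h (hsub ⟨le_rfl, (ha.trans hm).le⟩), h (hsub ⟨ha.le, hm.le⟩),
    h (hsub ⟨(ha.trans hm).le, le_rfl⟩)]

lemma haarCoeff_sub (F G : ℝ → H) (n : ℕ) :
    haarCoeff (F - G) n = haarCoeff F n - haarCoeff G n := by
  unfold haarCoeff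
  split_ifs
  · simp only [Pi.sub_apply]; abel
  · simp only [Pi.sub_apply, smul_sub]; abel

lemma eq_zero_at_dyadic_of_haarCoeff_eq_zero {F : ℝ → H} (h0 : F 0 = 0)
    (hcoeff : ∀ n, haarCoeff F n = 0) (k : ℕ) : ∀ j : ℕ, j ≤ 2 ^ k → F ((j : ℝ) / 2 ^ k) = 0 := by
  induction k with
  | zero =>
    intro j hj
    interval_cases j
    · simpa using h0
    · simpa [haarCoeff, h0] using hcoeff 0
  | succ k ih =>
    intro j hj
    rcases Nat.even_or_odd' j with ⟨i, rfl | rfl⟩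
    · have hi : i ≤ 2 ^ k := by rw [pow_succ] at hj; omega
      rw [← ih i hi, pow_succ]
      congr 1
      push_cast
      field_simp
    · have hl : i < 2 ^ k := by rw [pow_succ] at hj; omega
      have hdyadic : ∀ p : ℕ, ((2 * p : ℕ) : ℝ) / 2 ^ (k + 1) = (p : ℝ) / 2 ^ k := by
        intro p
        push_cast
        rw [pow_succ]
        field_simp
      have hleft : F (haarLeft k i) = 0 := by
        rw [← ih i hl.le, ← hdyadic, haarLeft, Nat.cast_mul, Nat.cast_two]
      have hright : F (haarRight k i) = 0 := by
        rw [← ih (i + 1) hl, ← hdyadic, haarRight]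
        push_cast
        ring_nf
      have h := hcoeff (2 ^ k + i)
      rw [haarCoeff_two_pow_add _ hl, hleft, hright, sub_zero, sub_zero,
        smul_eq_zero, smul_eq_zero] at h
      rcases h with h | h | h
      · exact absurd h (haarHeight_pos k).ne'
      · norm_num at h
      · simpa [haarMid] using h

lemma eqOn_zero_of_haarCoeff_eq_zero {F : ℝ → H} (hF : ContinuousOn F (Icc 0 1)) (h0 : F 0 = 0)
    (hcoeff : ∀ n, haarCoeff F n = 0) : EqOn F 0 (Icc 0 1) := by
  intro t ht
  set x : ℕ → ℝ := fun k => ⌊t * 2 ^ k⌋₊ / 2 ^ k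
  have hfloor : ∀ k : ℕ, ⌊t * 2 ^ k⌋₊ ≤ 2 ^ k := fun k =>
    Nat.floor_le_of_le (by push_cast; nlinarith [ht.2, pow_pos (two_pos (α := ℝ)) k])
  have hx_mem : ∀ k, x k ∈ Icc 0 1 := fun k =>
    ⟨by positivity, by rw [div_le_one (by positivity)]; exact_mod_cast hfloor k⟩
  have hx_lim : Tendsto x atTop (𝓝 t) :=
    (tendsto_nat_floor_mul_div_atTop ht.1).comp (tendsto_pow_atTop_atTop_of_one_lt one_lt_two)
  have hFx : Tendsto (fun k => F (x k)) atTop (𝓝 (F t)) :=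
    (hF t ht).tendsto.comp (tendsto_nhdsWithin_iff.mpr ⟨hx_lim, Eventually.of_forall hx_mem⟩)
  have hFx0 : ∀ k, F (x k) = 0 := fun k =>
    eq_zero_at_dyadic_of_haarCoeff_eq_zero h0 hcoeff k _ (hfloor k)
  simp only [hFx0] at hFx
  exact tendsto_nhds_unique hFx tendsto_const_nhds

end VectorValued

lemma continuousOn_of_memHolder {H : Type*} [NormedAddCommGroup H] {a : ℝ} (ha : 0 < a)
    {F : ℝ → H} (hF : MemHolder a F) : ContinuousOn F (Icc 0 1) := by
  obtain ⟨C, hC⟩ := hF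
  intro t ht
  have hbound : Tendsto (fun s => C * |s - t| ^ a) (𝓝 t) (𝓝 0) := by
    have hcont : Continuous fun s : ℝ => C * |s - t| ^ a :=
      continuous_const.mul ((continuous_abs.comp (continuous_sub_right t)).rpow_const
        fun _ => Or.inr ha.le)
    simpa [Real.zero_rpow ha.ne'] using hcont.tendsto t
  rw [ContinuousWithinAt, ← tendsto_sub_nhds_zero_iff]
  exact squeeze_zero_norm' (eventually_nhdsWithin_of_forall fun s hs => hC t ht s hs)
    (hbound.mono_left nhdsWithin_le_nhds)

lemma ae_eq_zero_of_intervalIntegral_eq_zero {E : Type*} [NormedAddCommGroup E]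
    [NormedSpace ℝ E] [CompleteSpace E] {u : ℝ → E} {a b : ℝ}
    (hu : IntervalIntegrable u volume a b) (h : ∀ t ∈ Icc a b, ∫ s in a..t, u s = 0) :
    u =ᵐ[volume.restrict (Icc a b)] 0 := by
  rw [EventuallyEq, ae_restrict_iff' measurableSet_Icc]
  filter_upwards [hu.ae_hasDerivAt_integral, (toFinite {a, b}).countable.ae_notMem volume]
    with x hderiv hx_ne hx
  have hx_Ioo : x ∈ Ioo a b := by
    simp only [mem_insert_iff, mem_singleton_iff, not_or] at hx_ne
    exact ⟨lt_of_le_of_ne hx.1 (Ne.symm hx_ne.1), lt_of_le_of_ne hx.2 hx_ne.2⟩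
  have hzero : HasDerivAt (fun t => ∫ s in a..t, u s) 0 x :=
    (hasDerivAt_const x (0 : E)).congr_of_eventuallyEq <| by
      filter_upwards [Ioo_mem_nhds hx_Ioo.1 hx_Ioo.2] with t ht
      exact h t (Ioo_subset_Icc_self ht)
  exact (hderiv (Icc_subset_uIcc hx) a left_mem_uIcc).unique hzero

lemma integral_indicator_eq_intervalIntegral {u : ℝ → ℝ} {S : Set ℝ} {a b : ℝ}
    (hS : MeasurableSet S) (hS01 : S ⊆ Icc 0 1) (hab : a ≤ b) (hSab : S =ᵐ[volume] Ioc a b) :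
    ∫ x, S.indicator u x ∂μ₀₁ = ∫ x in a..b, u x := by
  rw [integral_indicator hS, Measure.restrict_restrict hS, inter_eq_left.mpr hS01,
    setIntegral_congr_set hSab, intervalIntegral.integral_of_le hab]

lemma haarCoeff_primitive {u : ℝ → ℝ} (hu : IntegrableOn u (Icc 0 1)) (n : ℕ) :
    haarCoeff (fun t => ∫ s in (0:ℝ)..t, u s) n = ∫ x, haar n x * u x ∂μ₀₁ := by
  rcases eq_or_ne n 0 with rfl | hn
  · simp only [haarCoeff, if_pos, haar_zero, Pi.one_apply, one_mul,
      intervalIntegral.integral_same, sub_zero]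
    rw [intervalIntegral.integral_of_le zero_le_one, setIntegral_congr_set Ioc_ae_eq_Icc]
  obtain ⟨k, l, hl, rfl⟩ := exists_eq_two_pow_add hn
  have hsub := Icc_haarLeft_haarRight_subset hl
  have ha := haarLeft_lt_haarMid k l
  have hm := haarMid_lt_haarRight k l
  have hint : ∀ t ∈ Icc (0:ℝ) 1, IntervalIntegrable u volume 0 t := fun t ht =>
    (intervalIntegrable_iff_integrableOn_Icc_of_le ht.1).mpr
      (hu.mono_set (Icc_subset_Icc_right ht.2))
  have hsplit : ∀ x, haar (2 ^ k + l) x * u x =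
      haarHeight k * (Ico (haarLeft k l) (haarMid k l)).indicator u x
        - haarHeight k * (Icc (haarMid k l) (haarRight k l)).indicator u x := by
    intro x
    simp only [haar_two_pow_add_eq_indicator hl, indicator_apply, Pi.one_apply]
    split_ifs <;> ring
  simp_rw [hsplit]
  rw [integral_sub ((hu.indicator measurableSet_Ico).const_mul _)
      ((hu.indicator measurableSet_Icc).const_mul _), integral_const_mul, integral_const_mul,
    integral_indicator_eq_intervalIntegral measurableSet_Ico
      ((Ico_subset_Icc_self.trans (Icc_subset_Icc_right hm.le)).trans hsub) ha.le Ico_ae_eq_Ioc,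
    integral_indicator_eq_intervalIntegral measurableSet_Icc
      ((Icc_subset_Icc_left ha.le).trans hsub) hm.le Ioc_ae_eq_Icc.symm,
    haarCoeff_two_pow_add _ hl,
    ← intervalIntegral.integral_interval_sub_left (hint _ (hsub ⟨ha.le, hm.le⟩))
      (hint _ (hsub ⟨le_rfl, (ha.trans hm).le⟩)),
    ← intervalIntegral.integral_interval_sub_left (hint _ (hsub ⟨(ha.trans hm).le, le_rfl⟩))
      (hint _ (hsub ⟨ha.le, hm.le⟩))]
  simp only [smul_eq_mul]
  ring

lemma continuousOn_primitive {u : ℝ → ℝ} (hu : IntegrableOn u (Icc 0 1)) :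
    ContinuousOn (fun t => ∫ s in (0:ℝ)..t, u s) (Icc 0 1) := by
  have hu' : IntegrableOn u (uIcc 0 1) := by rwa [uIcc_of_le zero_le_one]
  simpa only [uIcc_of_le (zero_le_one' ℝ)] using
    intervalIntegral.continuousOn_primitive_interval hu'

lemma orthogonal_span_haarLp_eq_bot : (Submodule.span ℝ (range haarLp))ᗮ = ⊥ := by
  rw [Submodule.eq_bot_iff]
  intro f hf
  have hf_int : IntegrableOn f (Icc 0 1) := (Lp.memLp f).integrable one_le_two
  have hcoeff : ∀ n, haarCoeff (fun t => ∫ s in (0:ℝ)..t, f s) n = 0 := fun n => by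
    rw [haarCoeff_primitive hf_int, ← inner_haarLp]
    exact (Submodule.mem_orthogonal _ f).mp hf _ (Submodule.subset_span ⟨n, rfl⟩)
  have hprimitive :=
    eqOn_zero_of_haarCoeff_eq_zero (continuousOn_primitive hf_int) (by simp) hcoeff
  exact Lp.eq_zero_iff_ae_eq_zero.mpr (ae_eq_zero_of_intervalIntegral_eq_zero
    ((intervalIntegrable_iff_integrableOn_Icc_of_le zero_le_one).mpr hf_int) hprimitive)

def haarBasis : HilbertBasis ℕ ℝ (Lp ℝ 2 μ₀₁) :=
  HilbertBasis.mkOfOrthogonalEqBot orthonormal_haarLp orthogonal_span_haarLp_eq_bot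

lemma coe_haarBasis : ⇑haarBasis = haarLp :=
  HilbertBasis.coe_mkOfOrthogonalEqBot _ _

lemma summable_of_tsum_ofReal_ne_top {ι : Type*} {f : ι → ℝ} (hf : ∀ n, 0 ≤ f n)
    (h : ∑' n, ENNReal.ofReal (f n) ≠ ⊤) : Summable f := by
  simpa [ENNReal.toReal_ofReal (hf _)] using ENNReal.summable_toReal h

lemma inner_haarLp_toLp {u G : ℝ → ℝ} (hu : MemLp u 2 μ₀₁)
    (hG : ∀ t ∈ Icc (0:ℝ) 1, G t = ∫ s in (0:ℝ)..t, u s) (n : ℕ) :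
    inner ℝ (haarLp n) (hu.toLp u) = haarCoeff G n := by
  rw [haarCoeff_congr hG, haarCoeff_primitive (hu.integrable one_le_two), inner_haarLp]
  refine integral_congr_ae ?_
  filter_upwards [hu.coeFn_toLp] with x hx
  rw [hx]

lemma lintegral_sq_eq_tsum_haarCoeff_sq {u G : ℝ → ℝ} (hu : MemLp u 2 μ₀₁)
    (hG : ∀ t ∈ Icc (0:ℝ) 1, G t = ∫ s in (0:ℝ)..t, u s) :
    ∫⁻ x in Icc (0:ℝ) 1, ENNReal.ofReal (u x ^ 2) = ∑' n, ENNReal.ofReal (haarCoeff G n ^ 2) := by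
  have hterm : ∀ n, inner ℝ (hu.toLp u) (haarBasis n) * inner ℝ (haarBasis n) (hu.toLp u) =
      haarCoeff G n ^ 2 := fun n => by
    rw [real_inner_comm, coe_haarBasis, inner_haarLp_toLp hu hG, sq]
  have hparseval := haarBasis.hasSum_inner_mul_inner (hu.toLp u) (hu.toLp u)
  simp only [hterm, real_inner_self_eq_norm_sq] at hparseval
  have hnorm : ‖hu.toLp u‖ ^ 2 = ∫ x, u x ^ 2 ∂μ₀₁ := by
    rw [← real_inner_self_eq_norm_sq, L2.inner_def]
    refine integral_congr_ae ?_
    filter_upwards [hu.coeFn_toLp] with x hx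
    simp [hx, sq]
  rw [← ENNReal.ofReal_tsum_of_nonneg (fun n => sq_nonneg _) hparseval.summable,
    hparseval.tsum_eq, hnorm,
    ofReal_integral_eq_lintegral_ofReal hu.integrable_sq (ae_of_all _ fun x => sq_nonneg _)]

lemma memLp_two_of_lintegral_sq_ne_top {u : ℝ → ℝ} (hu : AEStronglyMeasurable u μ₀₁)
    (hfin : ∫⁻ x in Icc (0:ℝ) 1, ENNReal.ofReal (u x ^ 2) ≠ ⊤) : MemLp u 2 μ₀₁ := by
  refine (memLp_two_iff_integrable_sq hu).mpr ⟨hu.pow 2, ?_⟩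
  simpa [HasFiniteIntegral, Real.enorm_eq_ofReal (sq_nonneg _), lt_top_iff_ne_top] using hfin

lemma exists_primitive_of_summable_haarCoeff_sq {G : ℝ → ℝ} (hG : ContinuousOn G (Icc 0 1))
    (hG0 : G 0 = 0) (hsum : Summable fun n => haarCoeff G n ^ 2) :
    ∃ f : Lp ℝ 2 μ₀₁, ∀ t ∈ Icc (0:ℝ) 1, G t = ∫ s in (0:ℝ)..t, f s := by
  have hmem : Memℓp (haarCoeff G) 2 := memℓp_gen (by simpa using hsum)
  set f := haarBasis.repr.symm ⟨haarCoeff G, hmem⟩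
  have hf_int : IntegrableOn f (Icc 0 1) := (Lp.memLp f).integrable one_le_two
  have hcoeff : ∀ n, haarCoeff (G - fun t => ∫ s in (0:ℝ)..t, f s) n = 0 := fun n => by
    rw [haarCoeff_sub, haarCoeff_primitive hf_int, ← inner_haarLp, ← coe_haarBasis,
      ← haarBasis.repr_apply_apply, LinearIsometryEquiv.apply_symm_apply, sub_self]
  refine ⟨f, fun t ht => sub_eq_zero.mp ?_⟩
  exact eqOn_zero_of_haarCoeff_eq_zero (hG.sub (continuousOn_primitive hf_int)) (by simp [hG0])
    hcoeff ht

theorem rateI1_eq_tsum_haarCoeff_sq {G : ℝ → ℝ} (hG : ContinuousOn G (Icc 0 1)) (hG0 : G 0 = 0) :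
    rateI1 G = 1 / 2 * ∑' n, ENNReal.ofReal (haarCoeff G n ^ 2) := by
  refine le_antisymm ?_ ?_
  · by_cases htop : ∑' n, ENNReal.ofReal (haarCoeff G n ^ 2) = ⊤
    · rw [htop, ENNReal.mul_top (by norm_num)]
      exact le_top
    obtain ⟨f, hf⟩ := exists_primitive_of_summable_haarCoeff_sq hG hG0
      (summable_of_tsum_ofReal_ne_top (fun n => sq_nonneg _) htop)
    refine iInf₂_le_of_le f (Lp.aestronglyMeasurable f) (iInf_le_of_le hf ?_)
    rw [lintegral_sq_eq_tsum_haarCoeff_sq (Lp.memLp f) hf]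
  · refine le_iInf₂ fun u hu => le_iInf fun hGu => ?_
    by_cases htop : ∫⁻ s in Icc (0:ℝ) 1, ENNReal.ofReal (u s ^ 2) = ⊤
    · rw [htop, ENNReal.mul_top (by norm_num)]
      exact le_top
    rw [lintegral_sq_eq_tsum_haarCoeff_sq (memLp_two_of_lintegral_sq_ne_top hu htop) hGu]

lemma cCoef_ne_zero (α : ℝ) (n : ℕ) : cCoef α n ≠ 0 := by
  unfold cCoef
  split_ifs
  · exact one_ne_zero
  · exact (Real.rpow_pos_of_pos two_pos _).ne'

/-- **The scalar rate function in Schauder coordinates**: for `G ∈ C_α^0([0,1];ℝ)`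
with Schauder coefficients `G_n = c_n(α) ∫_{[0,1]} χ_n dG`, one has `Ĩ(G) < ∞` iff
`Σ_n G_n²/c_n(α)² < ∞`, and in that case `Ĩ(G) = Σ_n G_n²/(2 c_n(α)²)`. -/
theorem rateI1_eq_schauder_coords
    (α : ℝ) (hα : α ∈ Ioo (0:ℝ) (1/2))
    (G : ℝ → ℝ) (hG : MemHolder0 α G) :
    (rateI1 G < ⊤ ↔
      Summable (fun n => (cCoef α n * haarCoeff G n) ^ 2 / (cCoef α n) ^ 2)) ∧
    (Summable (fun n => (cCoef α n * haarCoeff G n) ^ 2 / (cCoef α n) ^ 2) →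
      rateI1 G
        = ENNReal.ofReal (∑' n, (cCoef α n * haarCoeff G n) ^ 2 / (2 * (cCoef α n) ^ 2))) := by
  obtain ⟨hG0, hG_holder, -⟩ := hG
  have hrate := rateI1_eq_tsum_haarCoeff_sq (continuousOn_of_memHolder hα.1 hG_holder) hG0
  have hcancel : ∀ n, (cCoef α n * haarCoeff G n) ^ 2 / (cCoef α n) ^ 2 = haarCoeff G n ^ 2 :=
    fun n => by field_simp [cCoef_ne_zero α n]
  have hcancel₂ : ∀ n, (cCoef α n * haarCoeff G n) ^ 2 / (2 * (cCoef α n) ^ 2) =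
      haarCoeff G n ^ 2 / 2 := fun n => by field_simp [cCoef_ne_zero α n]
  simp only [hcancel, hcancel₂]
  refine ⟨⟨fun hlt => ?_, fun hsum => ?_⟩, fun hsum => ?_⟩
  · refine summable_of_tsum_ofReal_ne_top (fun n => sq_nonneg _) fun htop => ?_
    rw [hrate, htop, ENNReal.mul_top (by norm_num)] at hlt
    exact lt_irrefl _ hlt
  · rw [hrate]
    exact ENNReal.mul_lt_top (by norm_num) hsum.tsum_ofReal_ne_top.lt_top
  · rw [hrate, ← ENNReal.ofReal_tsum_of_nonneg (fun n => sq_nonneg _) hsum, tsum_div_const,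
      ENNReal.ofReal_div_of_pos two_pos, ENNReal.ofReal_ofNat, one_div, ENNReal.div_eq_inv_mul]

end SchilderHilbert
end
end
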